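/- arXiv:1703.03140 — 2 statements merged into one kernel-verified Lean document; each statement's English description precedes it below -/
import Mathlib

section
/- The series defining the theta function with characteristics θ[ε;δ](τ,z) = Σ_{N∈ℤ^g} exp(πi{(N+ε)τ(N+ε)ᵀ + 2(N+ε)(z+δ)ᵀ}) converges absolutely for every (τ,z) ∈ ℍ_g × ℂ^g. -/
open Matrix Complex

noncomputable section

def SiegelUHP {g : ℕ} (τ : Matrix (Fin g) (Fin g) ℂ) : Prop :=
  τ.IsSymm ∧ (Matrix.of fun i j => (τ i j).im).PosDef

/-- General term of the theta series with characteristics ε, δ: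
exp(πi{(N+ε)τ(N+ε)ᵀ + 2(N+ε)(z+δ)ᵀ}). -/
def thetaTerm {g : ℕ} (ε δ : Fin g → ℝ) (τ : Matrix (Fin g) (Fin g) ℂ)
    (z : Fin g → ℂ) (N : Fin g → ℤ) : ℂ :=
  let v : Fin g → ℂ := fun i => ((N i : ℂ) + (ε i : ℂ))
  let w : Fin g → ℂ := fun i => z i + (δ i : ℂ)
  Complex.exp (Real.pi * Complex.I * (Matrix.vecMul v τ ⬝ᵥ v + 2 * (v ⬝ᵥ w)))

/-- 1-D Gaussian-type summability over the integers. -/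
lemma summable_exp_neg_int_sq {d : ℝ} (hd : 0 < d) :
    Summable fun n : ℤ => Real.exp (-(d * (n : ℝ) ^ 2)) := by
  have h := summable_pow_mul_jacobiTheta₂_term_bound 0 (T := d / Real.pi)
    (div_pos hd Real.pi_pos) 0
  refine h.congr fun n => ?_
  rw [pow_zero, one_mul]
  congr 1
  have hπ : Real.pi ≠ 0 := Real.pi_ne_zero
  field_simp
  ring

/-- Summability of products over pi types. -/
lemma summable_pi_prod {f : ℤ → ℝ} (hf : Summable f) (h0 : ∀ n, 0 ≤ f n) :
    ∀ g : ℕ, Summable fun N : Fin g → ℤ => ∏ i, f (N i) := by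
  intro g
  induction g with
  | zero => exact Summable.of_finite
  | succ n ih =>
      have h := hf.mul_of_nonneg ih (fun n => h0 n)
        (fun N => Finset.prod_nonneg fun i _ => h0 _)
      rw [← (Fin.consEquiv (fun _ : Fin (n+1) => ℤ)).summable_iff]
      refine h.congr fun p => ?_
      obtain ⟨a, b⟩ := p
      simp [Fin.consEquiv, Fin.prod_univ_succ]

/-- Coercivity of a positive definite quadratic form. -/
lemma posdef_coercive {g : ℕ} {Y : Matrix (Fin g) (Fin g) ℝ} (hY : Y.PosDef) :
    ∃ c > 0, ∀ x : Fin g → ℝ, c * ∑ i, x i ^ 2 ≤ x ⬝ᵥ Y *ᵥ x := by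
  rcases Nat.eq_zero_or_pos g with hg | hg
  · subst hg
    exact ⟨1, one_pos, fun x => by simp [dotProduct]⟩
  · set Q : (Fin g → ℝ) → ℝ := fun x => x ⬝ᵥ Y *ᵥ x with hQdef
    have hQcont : Continuous Q := by
      simp only [hQdef, dotProduct, Matrix.mulVec]
      exact continuous_finset_sum _ fun i _ =>
        (continuous_apply i).mul (continuous_finset_sum _ fun j _ =>
          continuous_const.mul (continuous_apply j))
    set S : Set (Fin g → ℝ) := {x | ∑ i, x i ^ 2 = 1} with hSdef
    have hfcont : Continuous fun x : Fin g → ℝ => ∑ i, x i ^ 2 :=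
      continuous_finset_sum _ fun i _ => (continuous_apply i).pow 2
    have hSclosed : IsClosed S := isClosed_eq hfcont continuous_const
    have hSsub : S ⊆ Metric.closedBall 0 1 := by
      intro x hx
      rw [Metric.mem_closedBall, dist_zero_right]
      rw [pi_norm_le_iff_of_nonneg zero_le_one]
      intro i
      have h1 : x i ^ 2 ≤ 1 := by
        rw [← hx]
        exact Finset.single_le_sum (fun j _ => sq_nonneg (x j)) (Finset.mem_univ i)
      rw [Real.norm_eq_abs]
      nlinarith [abs_nonneg (x i), _root_.sq_abs (x i)]
    have hScomp : IsCompact S :=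
      (isCompact_closedBall (0 : Fin g → ℝ) 1).of_isClosed_subset hSclosed hSsub
    have hSne : S.Nonempty := by
      refine ⟨Pi.single ⟨0, hg⟩ 1, ?_⟩
      simp only [hSdef, Set.mem_setOf_eq]
      rw [Finset.sum_eq_single ⟨0, hg⟩]
      · simp
      · intro j _ hj; rw [Pi.single_apply, if_neg hj]; ring
      · simp
    obtain ⟨a, haS, hmin⟩ := hScomp.exists_isMinOn hSne hQcont.continuousOn
    have ha0 : a ≠ 0 := by
      intro h
      rw [hSdef] at haS
      simp only [Set.mem_setOf_eq, h] at haS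
      simp at haS
    have hc : 0 < Q a := by
      have := hY.dotProduct_mulVec_pos ha0
      simpa using this
    refine ⟨Q a, hc, fun x => ?_⟩
    rcases eq_or_ne x 0 with rfl | hx
    · simp [hQdef]
    · have hsum : 0 < ∑ i, x i ^ 2 := by
        obtain ⟨i, hi⟩ := Function.ne_iff.mp hx
        have hi' : x i ≠ 0 := by simpa using hi
        exact Finset.sum_pos' (fun j _ => sq_nonneg _) ⟨i, Finset.mem_univ i, by positivity⟩
      set r : ℝ := Real.sqrt (∑ i, x i ^ 2) with hrdef
      have hr : 0 < r := Real.sqrt_pos.mpr hsum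
      have hr2 : r ^ 2 = ∑ i, x i ^ 2 := Real.sq_sqrt hsum.le
      have hu : r⁻¹ • x ∈ S := by
        simp only [hSdef, Set.mem_setOf_eq, Pi.smul_apply, smul_eq_mul, mul_pow,
          ← Finset.mul_sum, ← hr2]
        field_simp
      have hQu : Q (r⁻¹ • x) = r⁻¹ * (r⁻¹ * Q x) := by
        simp [hQdef, smul_dotProduct, Matrix.mulVec_smul, dotProduct_smul,
          smul_eq_mul]
      have hle : Q a ≤ r⁻¹ * (r⁻¹ * Q x) := hQu ▸ hmin hu
      have : Q a * r ^ 2 ≤ Q x := by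
        rw [← sub_nonneg] at hle
        have h2 : 0 ≤ (r⁻¹ * (r⁻¹ * Q x) - Q a) * r ^ 2 := mul_nonneg hle (sq_nonneg r)
        have h3 : (r⁻¹ * (r⁻¹ * Q x) - Q a) * r ^ 2 = Q x - Q a * r ^ 2 := by
          field_simp
        linarith [h3 ▸ h2]
      rw [← hr2]
      linarith [this]

/-- The modulus of a theta term. -/
lemma abs_thetaTerm {g : ℕ} (ε δ : Fin g → ℝ) (τ : Matrix (Fin g) (Fin g) ℂ)
    (z : Fin g → ℂ) (N : Fin g → ℤ) (hsym : τ.IsSymm) :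
    ‖thetaTerm ε δ τ z N‖ =
      Real.exp (-Real.pi *
        ((fun i => (N i : ℝ) + ε i) ⬝ᵥ (Matrix.of fun i j => (τ i j).im) *ᵥ
            (fun i => (N i : ℝ) + ε i)
          + 2 * ((fun i => (N i : ℝ) + ε i) ⬝ᵥ fun i => (z i).im))) := by
  set x : Fin g → ℝ := fun i => (N i : ℝ) + ε i with hx
  rw [thetaTerm, Complex.norm_exp]
  congr 1
  have hre : ∀ S : ℂ, ((Real.pi : ℂ) * Complex.I * S).re = -Real.pi * S.im := by
    intro S
    simp [Complex.mul_re, Complex.mul_im]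
  rw [hre]
  congr 1
  have hτ' : ∀ i j, (τ j i).im = (τ i j).im := fun i j => by
    rw [← hsym.apply i j]
  simp only [Complex.add_im, Complex.mul_im, dotProduct, Matrix.vecMul,
    Matrix.mulVec, Complex.im_sum, Complex.re_sum, Complex.add_re, Complex.intCast_re,
    Complex.ofReal_re, Complex.intCast_im, Complex.ofReal_im, Complex.mul_re,
    Complex.re_ofNat, Complex.im_ofNat, Matrix.of_apply]
  simp only [hx]
  congr 1
  refine Finset.sum_congr rfl fun i _ => ?_
  simp only [mul_zero, zero_mul, add_zero, zero_add]
  rw [Finset.sum_mul, Finset.mul_sum]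
  refine Finset.sum_congr rfl fun j _ => ?_
  rw [hτ' i j]
  ring
  simp

/-- Elementary per-coordinate inequality. -/
lemma theta_key_ineq (c n e q : ℝ) (hc : 0 < c) :
    c/4 * n^2 - (c/2*e^2 + 2*c*q^2) ≤ c * (n+e)^2 + 2*((n+e)*(c*q)) := by
  nlinarith [mul_nonneg hc.le (sq_nonneg (n+e+2*q)), mul_nonneg hc.le (sq_nonneg (n+2*e))]

/-- The theta series with characteristics converges absolutely on ℍ_g × ℂ^g. -/
theorem theta_series_converges_absolutely {g : ℕ} (ε δ : Fin g → ℝ)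
    (τ : Matrix (Fin g) (Fin g) ℂ) (z : Fin g → ℂ) (hτ : SiegelUHP τ) :
    Summable (fun N : Fin g → ℤ => ‖thetaTerm ε δ τ z N‖) := by
  obtain ⟨hsym, hpos⟩ := hτ
  obtain ⟨c, hc, hcoer⟩ := posdef_coercive hpos
  set q : Fin g → ℝ := fun i => (z i).im / c with hq
  set B : ℝ := ∑ i, (c/2 * (ε i)^2 + 2*c*(q i)^2) with hB
  set d : ℝ := Real.pi * c / 4 with hd
  have hd0 : 0 < d := by positivity
  have hmq : ∀ i, (z i).im = c * q i := fun i => by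
    rw [hq]; field_simp
  have hbound : ∀ N : Fin g → ℤ, ‖thetaTerm ε δ τ z N‖ ≤
      Real.exp (Real.pi * B) * ∏ i, Real.exp (-(d * (N i : ℝ) ^ 2)) := by
    intro N
    rw [abs_thetaTerm ε δ τ z N hsym, ← Real.exp_sum, ← Real.exp_add, Real.exp_le_exp]
    have h1 := hcoer (fun i => (N i : ℝ) + ε i)
    have h2 : ∑ i, (c/4 * (N i : ℝ)^2 - (c/2*(ε i)^2 + 2*c*(q i)^2)) ≤
        c * ∑ i, ((N i : ℝ) + ε i) ^ 2 +
          2 * ((fun i => (N i : ℝ) + ε i) ⬝ᵥ fun i => (z i).im) := by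
      rw [dotProduct, Finset.mul_sum, Finset.mul_sum, ← Finset.sum_add_distrib]
      refine Finset.sum_le_sum fun i _ => ?_
      rw [hmq i]
      exact theta_key_ineq c (N i) (ε i) (q i) hc
    have hBsum : ∑ i, (c/4 * (N i : ℝ)^2 - (c/2*(ε i)^2 + 2*c*(q i)^2)) =
        (∑ i, c/4 * (N i : ℝ)^2) - B := by
      rw [hB, Finset.sum_sub_distrib]
    have hA : ∑ i, -(d * (N i : ℝ)^2) = -(Real.pi * ∑ i, c/4 * (N i : ℝ)^2) := by
      rw [Finset.mul_sum, ← Finset.sum_neg_distrib]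
      exact Finset.sum_congr rfl fun i _ => by rw [hd]; ring
    have h3 : (∑ i, c/4 * (N i : ℝ)^2) - B ≤
        (fun i => (N i : ℝ) + ε i) ⬝ᵥ (Matrix.of fun i j => (τ i j).im) *ᵥ
            (fun i => (N i : ℝ) + ε i)
          + 2 * ((fun i => (N i : ℝ) + ε i) ⬝ᵥ fun i => (z i).im) := by
      rw [← hBsum]
      exact h2.trans (by linarith)
    have h4 := mul_le_mul_of_nonneg_left h3 Real.pi_pos.le
    rw [hA]
    nlinarith [h4]
  have hf := summable_exp_neg_int_sq hd0
  have hprod := summable_pi_prod hf (fun n => (Real.exp_pos _).le) g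
  exact Summable.of_nonneg_of_le (fun N => norm_nonneg _) hbound
    (hprod.mul_left _)
end
end

section
/- The stabilizer K^J of the point (iI_g, 0) ∈ ℍ_g × ℂ^{h×g} under the action of the Jacobi group G^J = Sp(2g,ℝ) ⋉ H_ℝ^{(g,h)} is exactly {(k,(0,0;κ)) : k ∈ Sp(2g,ℝ) stabilizing iI_g, κ ∈ ℝ^{h×h} symmetric}; in particular, if (M,(λ,μ;κ))·(iI_g,0) = (iI_g,0) then λ = μ = 0, κ is symmetric, and M·(iI_g) = iI_g. -/
open Matrix Complex

noncomputable section

def Jmat (g : ℕ) : Matrix (Fin g ⊕ Fin g) (Fin g ⊕ Fin g) ℝ :=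
  Matrix.fromBlocks 0 1 (-1) 0

def IsSp {g : ℕ} (M : Matrix (Fin g ⊕ Fin g) (Fin g ⊕ Fin g) ℝ) : Prop :=
  Mᵀ * Jmat g * M = Jmat g

def cmap {m n : Type*} (M : Matrix m n ℝ) : Matrix m n ℂ := M.map (fun x => (x : ℂ))

abbrev HeisTriple (g h : ℕ) :=
  Matrix (Fin h) (Fin g) ℝ × Matrix (Fin h) (Fin g) ℝ × Matrix (Fin h) (Fin h) ℝ

def IsHeis {g h : ℕ} (x : HeisTriple g h) : Prop :=
  (x.2.2 + x.2.1 * x.1ᵀ).IsSymm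

abbrev JacobiElt (g h : ℕ) :=
  Matrix (Fin g ⊕ Fin g) (Fin g ⊕ Fin g) ℝ × HeisTriple g h

def IsJacobi {g h : ℕ} (x : JacobiElt g h) : Prop := IsSp x.1 ∧ IsHeis x.2

def tildeL {g h : ℕ} (x : HeisTriple g h)
    (M : Matrix (Fin g ⊕ Fin g) (Fin g ⊕ Fin g) ℝ) : Matrix (Fin h) (Fin g) ℝ :=
  x.1 * M.toBlocks₁₁ + x.2.1 * M.toBlocks₂₁

def tildeM {g h : ℕ} (x : HeisTriple g h)
    (M : Matrix (Fin g ⊕ Fin g) (Fin g ⊕ Fin g) ℝ) : Matrix (Fin h) (Fin g) ℝ :=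
  x.1 * M.toBlocks₁₂ + x.2.1 * M.toBlocks₂₂

def jacobiMul {g h : ℕ} (x y : JacobiElt g h) : JacobiElt g h :=
  (x.1 * y.1,
    (tildeL x.2 y.1 + y.2.1, tildeM x.2 y.1 + y.2.2.1,
      x.2.2.2 + y.2.2.2 + tildeL x.2 y.1 * y.2.2.1ᵀ - tildeM x.2 y.1 * y.2.1ᵀ))

/-- The action of the Jacobi group on the Siegel-Jacobi space ℍ_g × ℂ^{h×g}:
(M,(λ,μ;κ))·(τ,z) = ((Aτ+B)(Cτ+D)⁻¹, (z+λτ+μ)(Cτ+D)⁻¹). -/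
def jacobiAct {g h : ℕ} (x : JacobiElt g h)
    (p : Matrix (Fin g) (Fin g) ℂ × Matrix (Fin h) (Fin g) ℂ) :
    Matrix (Fin g) (Fin g) ℂ × Matrix (Fin h) (Fin g) ℂ :=
  let Mc := cmap x.1
  (((Mc.toBlocks₁₁ * p.1 + Mc.toBlocks₁₂) * (Mc.toBlocks₂₁ * p.1 + Mc.toBlocks₂₂)⁻¹),
    (p.2 + cmap x.2.1 * p.1 + cmap x.2.2.1) * (Mc.toBlocks₂₁ * p.1 + Mc.toBlocks₂₂)⁻¹)


def siegelAct {g : ℕ} (M : Matrix (Fin g ⊕ Fin g) (Fin g ⊕ Fin g) ℝ)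
    (τ : Matrix (Fin g) (Fin g) ℂ) : Matrix (Fin g) (Fin g) ℂ :=
  ((cmap M).toBlocks₁₁ * τ + (cmap M).toBlocks₁₂) *
    ((cmap M).toBlocks₂₁ * τ + (cmap M).toBlocks₂₂)⁻¹


open scoped ComplexOrder

section Aux

lemma cmap_mul {m n p : Type*} [Fintype n] (A : Matrix m n ℝ) (B : Matrix n p ℝ) :
    cmap (A * B) = cmap A * cmap B :=
  Matrix.map_mul (f := Complex.ofRealHom)

lemma cmap_add {m n : Type*} (A B : Matrix m n ℝ) : cmap (A + B) = cmap A + cmap B := by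
  ext i j; simp [cmap]

lemma cmap_neg {m n : Type*} (A : Matrix m n ℝ) : cmap (-A) = -cmap A := by
  ext i j; simp [cmap]

lemma cmap_one {m : Type*} [DecidableEq m] : cmap (1 : Matrix m m ℝ) = 1 := by
  simp [cmap]

lemma cmap_zero {m n : Type*} : cmap (0 : Matrix m n ℝ) = 0 := by
  ext i j; simp [cmap]

lemma cmap_transpose {m n : Type*} (A : Matrix m n ℝ) : cmap Aᵀ = (cmap A)ᵀ := rfl

lemma cmap_conjTranspose {m n : Type*} (A : Matrix m n ℝ) : (cmap A)ᴴ = cmap Aᵀ := by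
  ext i j; simp [cmap, Matrix.conjTranspose_apply]

lemma abstract_key {n : Type*} [Fintype n] [DecidableEq n]
    (a b c d : Matrix n n ℂ)
    (r1 : -(cᵀ*a) + aᵀ*c = 0) (r2 : -(cᵀ*b) + aᵀ*d = 1)
    (r3 : -(dᵀ*a) + bᵀ*c = -1) (r4 : -(dᵀ*b) + bᵀ*d = 0)
    (ha : aᴴ = aᵀ) (hb : bᴴ = bᵀ) (hc : cᴴ = cᵀ) (hd : dᴴ = dᵀ) :
    (Complex.I • c + d)ᴴ * (Complex.I • a + b) - (Complex.I • a + b)ᴴ * (Complex.I • c + d)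
      = (2 * Complex.I) • 1 := by
  have e1 : aᵀ*c = cᵀ*a := by rwa [neg_add_eq_sub, sub_eq_zero] at r1
  have e4 : bᵀ*d = dᵀ*b := by rwa [neg_add_eq_sub, sub_eq_zero] at r4
  have e2 : aᵀ*d = 1 + cᵀ*b := by rw [← r2]; abel
  have e3 : dᵀ*a = 1 + bᵀ*c := by
    have h' : bᵀ*c - dᵀ*a = -1 := by rw [← r3]; abel
    rw [sub_eq_iff_eq_add.mp h']; abel
  simp only [conjTranspose_add, conjTranspose_smul, ha, hb, hc, hd, Complex.star_def,
    Complex.conj_I, add_mul, mul_add, smul_mul_assoc, mul_smul_comm, smul_smul,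
    neg_smul, neg_mul, Complex.I_mul_I, neg_neg, one_smul]
  rw [e1, e2, e3, e4]
  simp only [smul_add, smul_smul, two_mul, add_smul]
  abel

lemma sp_blocks {g : ℕ} {M : Matrix (Fin g ⊕ Fin g) (Fin g ⊕ Fin g) ℝ} (hM : IsSp M) :
    -(M.toBlocks₂₁ᵀ * M.toBlocks₁₁) + M.toBlocks₁₁ᵀ * M.toBlocks₂₁ = 0 ∧
    -(M.toBlocks₂₁ᵀ * M.toBlocks₁₂) + M.toBlocks₁₁ᵀ * M.toBlocks₂₂ = 1 ∧
    -(M.toBlocks₂₂ᵀ * M.toBlocks₁₁) + M.toBlocks₁₂ᵀ * M.toBlocks₂₁ = -1 ∧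
    -(M.toBlocks₂₂ᵀ * M.toBlocks₁₂) + M.toBlocks₁₂ᵀ * M.toBlocks₂₂ = 0 := by
  have h := hM
  rw [IsSp, Jmat, ← fromBlocks_toBlocks M, fromBlocks_transpose, fromBlocks_multiply,
    fromBlocks_multiply] at h
  simp only [Matrix.mul_zero, Matrix.mul_one, Matrix.mul_neg, Matrix.zero_mul, Matrix.one_mul,
    Matrix.neg_mul, zero_add, add_zero] at h
  exact Matrix.fromBlocks_inj.mp h

lemma key_identity {g : ℕ} {M : Matrix (Fin g ⊕ Fin g) (Fin g ⊕ Fin g) ℝ} (hM : IsSp M) :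
    (Complex.I • cmap M.toBlocks₂₁ + cmap M.toBlocks₂₂)ᴴ *
        (Complex.I • cmap M.toBlocks₁₁ + cmap M.toBlocks₁₂) -
      (Complex.I • cmap M.toBlocks₁₁ + cmap M.toBlocks₁₂)ᴴ *
        (Complex.I • cmap M.toBlocks₂₁ + cmap M.toBlocks₂₂) = (2 * Complex.I) • 1 := by
  obtain ⟨h1, h2, h3, h4⟩ := sp_blocks hM
  refine abstract_key _ _ _ _ ?_ ?_ ?_ ?_ (cmap_conjTranspose _) (cmap_conjTranspose _)
    (cmap_conjTranspose _) (cmap_conjTranspose _) <;>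
  · rw [← cmap_transpose, ← cmap_mul, ← cmap_transpose, ← cmap_mul, ← cmap_neg, ← cmap_add]
    first
      | (rw [h1]; exact cmap_zero)
      | (rw [h2]; exact cmap_one)
      | (rw [h3]; rw [cmap_neg, cmap_one])
      | (rw [h4]; exact cmap_zero)

lemma det_ne_zero {g : ℕ} {M : Matrix (Fin g ⊕ Fin g) (Fin g ⊕ Fin g) ℝ} (hM : IsSp M) :
    ((cmap M).toBlocks₂₁ * (Complex.I • (1 : Matrix (Fin g) (Fin g) ℂ)) +
      (cmap M).toBlocks₂₂).det ≠ 0 := by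
  have hrw : (cmap M).toBlocks₂₁ * (Complex.I • (1 : Matrix (Fin g) (Fin g) ℂ)) +
      (cmap M).toBlocks₂₂ = Complex.I • cmap M.toBlocks₂₁ + cmap M.toBlocks₂₂ := by
    rw [mul_smul_comm, mul_one]; rfl
  rw [hrw]
  intro hdet
  set N := Complex.I • cmap M.toBlocks₂₁ + cmap M.toBlocks₂₂ with hN
  set K := Complex.I • cmap M.toBlocks₁₁ + cmap M.toBlocks₁₂ with hK
  obtain ⟨v, hv, hNv⟩ := (Matrix.exists_mulVec_eq_zero_iff).mpr hdet
  have key := key_identity hM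
  have h1 : star v ⬝ᵥ ((Nᴴ * K - Kᴴ * N) *ᵥ v) = (2 * Complex.I) * (star v ⬝ᵥ v) := by
    rw [key, Matrix.smul_mulVec, Matrix.one_mulVec, dotProduct_smul, smul_eq_mul]
  have h2 : star v ⬝ᵥ ((Nᴴ * K - Kᴴ * N) *ᵥ v) = 0 := by
    rw [Matrix.sub_mulVec, dotProduct_sub, ← Matrix.mulVec_mulVec, ← Matrix.mulVec_mulVec,
      hNv, Matrix.mulVec_zero, dotProduct_zero, Matrix.dotProduct_mulVec,
      ← Matrix.star_mulVec, hNv, star_zero, zero_dotProduct, sub_zero]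
  rw [h1] at h2
  have : star v ⬝ᵥ v = 0 := by
    have h2I : (2 * Complex.I) ≠ 0 := by simp [Complex.I_ne_zero]
    exact (mul_eq_zero.mp h2).resolve_left h2I
  exact hv (dotProduct_star_self_eq_zero.mp this)

end Aux

/-- The stabilizer of the base point (iI_g, 0) in the Jacobi group is exactly
{(k,(0,0;κ)) : k ∈ Sp(2g,ℝ) stabilizes iI_g, κ symmetric}. -/
theorem jacobi_stabilizer_of_base_point {g h : ℕ} (x : JacobiElt g h)
    (hx : IsJacobi x) :
    jacobiAct x (Complex.I • (1 : Matrix (Fin g) (Fin g) ℂ),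
        (0 : Matrix (Fin h) (Fin g) ℂ)) =
      (Complex.I • (1 : Matrix (Fin g) (Fin g) ℂ), 0) ↔
    (x.2.1 = 0 ∧ x.2.2.1 = 0 ∧ x.2.2.2.IsSymm ∧
      siegelAct x.1 (Complex.I • (1 : Matrix (Fin g) (Fin g) ℂ)) =
        Complex.I • (1 : Matrix (Fin g) (Fin g) ℂ)) := by
  set τ := Complex.I • (1 : Matrix (Fin g) (Fin g) ℂ) with hτ
  have hdet := det_ne_zero (g := g) hx.1
  set N := (cmap x.1).toBlocks₂₁ * τ + (cmap x.1).toBlocks₂₂ with hNdef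
  have hNunit : IsUnit N.det := isUnit_iff_ne_zero.mpr hdet
  constructor
  · intro heq
    have hfst := congrArg Prod.fst heq
    have hsnd := congrArg Prod.snd heq
    simp only [jacobiAct] at hfst hsnd
    rw [← hNdef] at hsnd
    have hX : cmap x.2.1 * τ + cmap x.2.2.1 = 0 := by
      have h' := congrArg (· * N) hsnd
      simp only [zero_add, Matrix.zero_mul] at h'
      rwa [Matrix.mul_assoc, Matrix.nonsing_inv_mul N hNunit, Matrix.mul_one] at h'
    rw [hτ, Matrix.mul_smul, Matrix.mul_one] at hX
    have hlam : x.2.1 = 0 := by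
      ext i j
      have hij := congrFun (congrFun hX i) j
      simp only [Matrix.add_apply, Matrix.smul_apply, Matrix.zero_apply, cmap,
        Matrix.map_apply, smul_eq_mul, Complex.ext_iff, Complex.add_re, Complex.add_im,
        Complex.mul_re, Complex.mul_im, Complex.I_re, Complex.I_im, Complex.ofReal_re,
        Complex.ofReal_im, Complex.zero_re, Complex.zero_im] at hij
      simpa using hij.2
    have hmu : x.2.2.1 = 0 := by
      ext i j
      have hij := congrFun (congrFun hX i) j
      simp only [Matrix.add_apply, Matrix.smul_apply, Matrix.zero_apply, cmap,
        Matrix.map_apply, smul_eq_mul, Complex.ext_iff, Complex.add_re, Complex.add_im,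
        Complex.mul_re, Complex.mul_im, Complex.I_re, Complex.I_im, Complex.ofReal_re,
        Complex.ofReal_im, Complex.zero_re, Complex.zero_im] at hij
      simpa using hij.1
    refine ⟨hlam, hmu, ?_, ?_⟩
    · have hk := hx.2
      rw [IsHeis, hmu, Matrix.zero_mul, add_zero] at hk
      exact hk
    · exact hfst
  · rintro ⟨hlam, hmu, _, hs⟩
    have hz : ((0 : Matrix (Fin h) (Fin g) ℂ) + cmap x.2.1 * τ + cmap x.2.2.1) * N⁻¹ = 0 := by
      simp [hlam, hmu, cmap_zero]
    exact Prod.ext hs hz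
end
end
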